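/- arXiv:math/9511221 — 3 statements merged into one kernel-verified Lean document; each statement's English description precedes it below -/
import Mathlib

section
/- Let f : I → I be continuous on a compact interval, let p < s be points with f^2(p) = p, f^2(x) > x for all x ∈ (q, s) where q is the largest fixed point of f^2 in [p, s], and f^2(s) > s. Then s belongs to the unstable manifold W^u(q, f^2) of q for f^2, and by connectedness the whole interval [q, s] is contained in W^u(q, f^2). -/
/-! On `(q, s]` the map `g = f²` moves every point strictly to the right, so no orbit starting in
`(q, s]` stays below `s`: a bounded increasing orbit would converge to a fixed point of `g` in
`(q, s]`. Hence every small interval `[q, t]` has an iterate `gⁿ` that fixes `q` and pushes `t`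
beyond `s`, and by the intermediate value theorem `gⁿ [q, t] ⊇ [q, s]`. -/

/-- The unstable manifold of a fixed point `p` of `g` relative to the interval `I`. -/
def unstableManifold (g : ℝ → ℝ) (I : Set ℝ) (p : ℝ) : Set ℝ :=
  {x ∈ I | ∀ V : Set ℝ, IsOpen V → p ∈ V → ∃ n : ℕ, 1 ≤ n ∧ x ∈ g^[n] '' (V ∩ I)}

open Set Filter Topology Function

theorem isFixedPt_of_tendsto_iterate_of_continuousWithinAt {α : Type*} [TopologicalSpace α]
    [T2Space α] {f : α → α} {S : Set α} {x y : α}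
    (hy : Tendsto (fun n => f^[n] x) atTop (𝓝 y)) (hS : ∀ n, f^[n] x ∈ S)
    (hf : ContinuousWithinAt f S y) : IsFixedPt f y := by
  refine tendsto_nhds_unique ((tendsto_add_atTop_iff_nat 1).1 ?_) hy
  simp only [iterate_succ' f]
  exact hf.tendsto.comp (tendsto_nhdsWithin_iff.2 ⟨hy, Eventually.of_forall hS⟩)

theorem exists_lt_iterate_of_lt_apply {g : ℝ → ℝ} {t s : ℝ} (hg : ContinuousOn g (Icc t s))
    (hlt : ∀ x ∈ Icc t s, x < g x) : ∃ n, s < g^[n] t := by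
  by_contra! hle
  have horbit : ∀ n, g^[n] t ∈ Icc t s := fun n => by
    induction n with
    | zero => exact ⟨le_rfl, hle 0⟩
    | succ n ih =>
      refine ⟨ih.1.trans ?_, hle _⟩
      rw [iterate_succ_apply']
      exact (hlt _ ih).le
  have hmono : Monotone fun n => g^[n] t := monotone_nat_of_le_succ fun n => by
    rw [iterate_succ_apply']
    exact (hlt _ (horbit n)).le
  have hbdd : BddAbove (range fun n => g^[n] t) :=
    ⟨s, forall_mem_range.2 fun n => (horbit n).2⟩
  have hlim := tendsto_atTop_ciSup hmono hbdd
  have hL := isClosed_Icc.mem_of_tendsto hlim (Eventually.of_forall horbit)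
  have hfix := isFixedPt_of_tendsto_iterate_of_continuousWithinAt hlim horbit (hg _ hL)
  exact (hlt _ hL).ne hfix.symm

theorem Icc_subset_unstableManifold {g : ℝ → ℝ} {I : Set ℝ} {q s : ℝ} (hqs : q < s)
    (hI : Icc q s ⊆ I) (hg : ContinuousOn g I) (hgI : MapsTo g I I) (hq : IsFixedPt g q)
    (hesc : ∀ t ∈ Ioc q s, ∃ n, s < g^[n] t) :
    Icc q s ⊆ unstableManifold g I q := by
  intro x hx
  refine ⟨hI hx, fun V hV hqV => ?_⟩
  obtain ⟨u, hqu, huV⟩ :=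
    mem_nhdsGE_iff_exists_Icc_subset.1 (mem_nhdsWithin_of_mem_nhds (hV.mem_nhds hqV))
  set t := min u s
  have hts : t ≤ s := min_le_right _ _
  have hqt : q < t := lt_min hqu hqs
  have htV : Icc q t ⊆ V := (Icc_subset_Icc_right (min_le_left _ _)).trans huV
  have htI : Icc q t ⊆ I := (Icc_subset_Icc_right hts).trans hI
  obtain ⟨n, hn⟩ := hesc t ⟨hqt, hts⟩
  have hn0 : n ≠ 0 := by
    rintro rfl
    exact hts.not_gt hn
  have hIVT : Icc q (g^[n] t) ⊆ g^[n] '' Icc q t := by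
    simpa only [(hq.iterate n).eq] using
      intermediate_value_Icc hqt.le ((hg.iterate hgI n).mono htI)
  exact ⟨n, Nat.one_le_iff_ne_zero.2 hn0,
    image_mono (subset_inter htV htI) (hIVT ⟨hx.1, hx.2.trans hn.le⟩)⟩

theorem interval_in_unstable_manifold_of_largest_fixed_point_general
    (A B : ℝ) (f : ℝ → ℝ)
    (hf : ContinuousOn f (Set.Icc A B))
    (hmap : Set.MapsTo f (Set.Icc A B) (Set.Icc A B))
    (p s : ℝ) (hpI : p ∈ Set.Icc A B) (hsI : s ∈ Set.Icc A B)
    (q : ℝ) (hq : q ∈ Set.Icc p s) (hfq : f^[2] q = q)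
    (hgap : ∀ x ∈ Set.Ioo q s, x < f^[2] x)
    (hs : s < f^[2] s) :
    s ∈ unstableManifold (f^[2]) (Set.Icc A B) q ∧
    Set.Icc q s ⊆ unstableManifold (f^[2]) (Set.Icc A B) q := by
  have hqs : q < s := hq.2.lt_of_ne (by rintro rfl; exact hs.ne' hfq)
  have hI : Icc q s ⊆ Icc A B := Icc_subset_Icc (hpI.1.trans hq.1) hsI.2
  have hg := hf.iterate hmap 2
  have hmoves : ∀ t ∈ Ioc q s, ∀ x ∈ Icc t s, x < f^[2] x := fun t ht x hx =>
    hx.2.lt_or_eq.elim (fun hxs => hgap x ⟨ht.1.trans_le hx.1, hxs⟩) fun hxs => hxs ▸ hs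
  have hsub := Icc_subset_unstableManifold hqs hI hg (hmap.iterate 2) hfq fun t ht =>
    exists_lt_iterate_of_lt_apply (hg.mono ((Icc_subset_Icc_left ht.1.le).trans hI)) (hmoves t ht)
  exact ⟨hsub (right_mem_Icc.2 hqs.le), hsub⟩

theorem interval_in_unstable_manifold_of_largest_fixed_point
    (A B : ℝ) (f : ℝ → ℝ)
    (hf : ContinuousOn f (Set.Icc A B))
    (hmap : Set.MapsTo f (Set.Icc A B) (Set.Icc A B))
    (p s : ℝ) (hps : p < s) (hpI : p ∈ Set.Icc A B) (hsI : s ∈ Set.Icc A B)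
    (hp : f^[2] p = p)
    (q : ℝ) (hq : q ∈ Set.Icc p s) (hfq : f^[2] q = q)
    (hqmax : ∀ x ∈ Set.Icc p s, f^[2] x = x → x ≤ q)
    (hgap : ∀ x ∈ Set.Ioo q s, x < f^[2] x)
    (hs : s < f^[2] s) :
    s ∈ unstableManifold (f^[2]) (Set.Icc A B) q ∧
    Set.Icc q s ⊆ unstableManifold (f^[2]) (Set.Icc A B) q :=
  interval_in_unstable_manifold_of_largest_fixed_point_general A B f hf hmap p s hpI hsI q hq hfq
    hgap hs
end

section
/- Let f : I → I be continuous on a compact interval and suppose f has a homoclinic point: there is a periodic point p of period n and a point x ≠ p with x ∈ W^u(p, f^n) and f^{mn}(x) = p for some m ≥ 1. Then f has positive topological entropy. -/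
open Filter ENNReal

/-- The maximal cardinality of an `(n, ε)`-separated subset of `I` for `f`. -/
noncomputable def sepCard (f : ℝ → ℝ) (I : Set ℝ) (n : ℕ) (ε : ℝ) : ℝ≥0∞ :=
  sSup {c : ℝ≥0∞ | ∃ S : Finset ℝ, ↑S ⊆ I ∧ c = S.card ∧
    ∀ x ∈ S, ∀ y ∈ S, x ≠ y → ∃ m < n, ε < |f^[m] x - f^[m] y|}

/-- Topological entropy of `f` on `I` via `(n,ε)`-separated sets.  Since
`ε ↦ limsup_n (1/n) log H(f,n,ε)` is monotone as `ε` decreases, the limit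
as `ε → 0` equals the supremum over `ε > 0`. -/
noncomputable def topEntropy (f : ℝ → ℝ) (I : Set ℝ) : EReal :=
  ⨆ (ε : ℝ) (_ : 0 < ε),
    Filter.limsup (fun n : ℕ => ENNReal.log (sepCard f I n ε) / (n : EReal)) atTop

/-!
Put `g = f^[n]`. The homoclinic orbit produces an iterate `G = g^[N]` with a horseshoe: two
disjoint compact sets `K₀, K₁ ⊆ I` such that `G '' K_a ⊇ K_b` for all `a, b`. Then every word of
length `j` in `K₀, K₁` is the itinerary of some point under `G`, points with different words are
`(nNj, ε)`-separated where `ε` is the gap between `K₀` and `K₁`, and so `h(f) ≥ log 2 / (nN)`.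

The horseshoe comes from a fold: if `y` lies strictly between `p` and `z`, `g^[k] y = z` and the
orbit of `z` reaches `p`, then some iterate `G` fixes `p`, sends `y` to `p` and a point `d` between
them to `z`, so both `[p, d]` and `[d, y]` cover `[p, y]` while `d` leaves it. Say `p < x`. If some
point of `[p, x)` is a preimage of `x`, fold with `z = x`. Otherwise the preimages of `x` that
accumulate at `p` lie to its left; with `s` the largest point left of `p` and `g s = x`, the orbit
of such a preimage `y ∈ (s, p)` jumps over `p` from a point `≤ s`, so some point of `[y, p)` is
a preimage of `s`, and we fold with `z = s`.
-/

open Set Function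

structure IsHorseshoe {α : Type*} [TopologicalSpace α] (F : α → α) (K : Bool → Set α) : Prop where
  isCompact : ∀ b, IsCompact (K b)
  nonempty : ∀ b, (K b).Nonempty
  disjoint : Disjoint (K true) (K false)
  surjOn : ∀ a b, SurjOn F (K a) (K b)

theorem exists_forall_iterate_mem_of_surjOn {α ι : Type*} {F : α → α} {K : ι → Set α}
    (hsurj : ∀ a b, SurjOn F (K a) (K b)) (hne : ∀ a, (K a).Nonempty) (j : ℕ) (w : ℕ → ι) :
    ∃ z, ∀ i ≤ j, F^[i] z ∈ K (w i) := by
  induction j generalizing w with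
  | zero => exact (hne (w 0)).imp fun z hz i hi => by rwa [Nat.le_zero.1 hi]
  | succ j ih =>
    obtain ⟨z', hz'⟩ := ih (w ∘ Nat.succ)
    obtain ⟨z, hz, rfl⟩ := hsurj (w 0) (w 1) (hz' 0 j.zero_le)
    refine ⟨z, fun i hi => ?_⟩
    cases i with
    | zero => exact hz
    | succ i => exact hz' i (by omega)

namespace IsHorseshoe

variable {α : Type*} {F : α → α} {K : Bool → Set α}

theorem exists_pos_lt_dist [MetricSpace α] (hK : IsHorseshoe F K) :
    ∃ ε > 0, ∀ a b, a ≠ b → ∀ u ∈ K a, ∀ v ∈ K b, ε < dist u v := by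
  obtain ⟨r, hr, hsep⟩ :=
    Metric.exists_pos_forall_lt_edist (hK.isCompact true) (hK.isCompact false).isClosed hK.disjoint
  have hsep' : ∀ u ∈ K true, ∀ v ∈ K false, (r : ℝ) < dist u v := fun u hu v hv => by
    have h := hsep u hu v hv
    rw [edist_nndist, ENNReal.coe_lt_coe] at h
    exact_mod_cast h
  refine ⟨r, hr, ?_⟩
  rintro (_ | _) (_ | _) hab u hu v hv
  · exact absurd rfl hab
  · exact dist_comm u v ▸ hsep' v hv u hu
  · exact hsep' u hu v hv
  · exact absurd rfl hab

theorem iterate_ne_zero [TopologicalSpace α] {P : ℕ} (hK : IsHorseshoe (F^[P]) K) : P ≠ 0 := by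
  rintro rfl
  obtain ⟨z, hz⟩ := hK.nonempty false
  obtain ⟨z', hz', rfl⟩ := hK.surjOn true false hz
  exact hK.disjoint.ne_of_mem hz' hz rfl

end IsHorseshoe

theorem card_le_sepCard {ι : Type*} [Fintype ι] {f : ℝ → ℝ} {I : Set ℝ} {n : ℕ} {ε : ℝ}
    (hε : 0 ≤ ε) (z : ι → ℝ) (hzI : ∀ i, z i ∈ I)
    (hsep : Pairwise fun i i' => ∃ m < n, ε < |f^[m] (z i) - f^[m] (z i')|) :
    (Fintype.card ι : ℝ≥0∞) ≤ sepCard f I n ε := by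
  classical
  have hinj : Injective z := fun i i' h => by
    by_contra hne
    obtain ⟨m, -, hm⟩ := hsep hne
    rw [h, sub_self, abs_zero] at hm
    exact hm.not_ge hε
  refine le_sSup ⟨Finset.univ.image z, ?_, ?_, ?_⟩
  · simpa [Set.range_subset_iff] using hzI
  · rw [Finset.card_image_of_injective _ hinj, Finset.card_univ]
  · simp only [Finset.mem_image, Finset.mem_univ, true_and]
    rintro _ ⟨i, rfl⟩ _ ⟨i', rfl⟩ hne
    exact hsep (ne_of_apply_ne z hne)

theorem topEntropy_pos_of_two_pow_le_sepCard {f : ℝ → ℝ} {I : Set ℝ} {P : ℕ} (hP : P ≠ 0)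
    {ε : ℝ} (hε : 0 < ε) (h : ∀ j, (2 : ℝ≥0∞) ^ j ≤ sepCard f I (P * j) ε) :
    0 < topEntropy f I := by
  have hlog : ∀ j ≠ 0,
      ((Real.log 2 / P : ℝ) : EReal) = ENNReal.log (2 ^ j) / ((P * j : ℕ) : EReal) := fun j hj => by
    rw [ENNReal.log_pow, show (2 : ℝ≥0∞) = ENNReal.ofReal 2 by norm_num,
      ENNReal.log_ofReal_of_pos two_pos, ← EReal.coe_coe_eq_natCast, ← EReal.coe_mul,
      ← EReal.coe_coe_eq_natCast, ← EReal.coe_div]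
    congr 1
    push_cast
    field_simp
  have hfreq : ∃ᶠ k in atTop,
      ((Real.log 2 / P : ℝ) : EReal) ≤ ENNReal.log (sepCard f I k ε) / (k : EReal) := by
    refine frequently_atTop.2 fun a => ⟨P * (a + 1), ?_, ?_⟩
    · nlinarith [Nat.one_le_iff_ne_zero.2 hP]
    · rw [hlog (a + 1) a.succ_ne_zero]
      exact EReal.div_le_div_right_of_nonneg (Nat.cast_nonneg' _) (ENNReal.log_monotone (h _))
  calc 0 < ((Real.log 2 / P : ℝ) : EReal) :=
        EReal.coe_pos.2 (div_pos (Real.log_pos one_lt_two) (by positivity))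
    _ ≤ limsup (fun k : ℕ => ENNReal.log (sepCard f I k ε) / (k : EReal)) atTop :=
      le_limsup_of_frequently_le' hfreq
    _ ≤ topEntropy f I := le_iSup₂_of_le ε hε le_rfl

theorem IsHorseshoe.topEntropy_pos {f : ℝ → ℝ} {I : Set ℝ} {P : ℕ} {K : Bool → Set ℝ}
    (hK : IsHorseshoe (f^[P]) K) (hKI : ∀ b, K b ⊆ I) : 0 < topEntropy f I := by
  obtain ⟨ε, hε, hsep⟩ := hK.exists_pos_lt_dist
  have hP := hK.iterate_ne_zero
  refine topEntropy_pos_of_two_pow_le_sepCard hP hε fun j => ?_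
  let extend (w : Fin j → Bool) (i : ℕ) : Bool := if h : i < j then w ⟨i, h⟩ else true
  choose z hz using fun w =>
    exists_forall_iterate_mem_of_surjOn hK.surjOn hK.nonempty j (extend w)
  refine le_of_eq_of_le (by simp)
    (card_le_sepCard hε.le z (fun w => hKI _ (hz w 0 j.zero_le)) fun w w' hne => ?_)
  obtain ⟨i, hi⟩ := Function.ne_iff.1 hne
  refine ⟨P * i, Nat.mul_lt_mul_of_pos_left i.isLt (Nat.pos_of_ne_zero hP), ?_⟩
  have hmem : ∀ w, f^[P * i] (z w) ∈ K (w i) := fun w => by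
    simpa [iterate_mul, extend] using hz w i i.isLt.le
  simpa [Real.dist_eq] using hsep _ _ hi _ (hmem w) _ (hmem w')

theorem iterate_eq_of_iterate_eq_of_le {β : Type*} {g : β → β} {p z : β} (hgp : g p = p)
    {i m : ℕ} (hz : g^[i] z = p) (him : i ≤ m) : g^[m] z = p := by
  rw [← Nat.sub_add_cancel him, iterate_add_apply, hz, iterate_fixed hgp]

theorem exists_iterate_lt_le_apply_iterate {β : Type*} [LinearOrder β] {g : β → β} {p x y : β}
    (hpx : p < x) (hno : ∀ v ∈ Ico p x, ∀ k, g^[k] v ≠ x) (hy : y < p) {k : ℕ}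
    (hk : g^[k] y = x) : ∃ j < k, g^[j] y < p ∧ x ≤ g (g^[j] y) := by
  set j := Nat.findGreatest (fun t => g^[t] y < p) k
  have hj : g^[j] y < p := Nat.findGreatest_spec (P := fun t => g^[t] y < p) k.zero_le hy
  have hjk : j < k := by
    refine (Nat.findGreatest_le k).lt_of_ne fun h => ?_
    rw [show j = k from h, hk] at hj
    exact hj.not_gt hpx
  have hpj : p ≤ g^[j + 1] y := not_lt.1 (Nat.findGreatest_is_greatest j.lt_succ_self hjk)
  refine ⟨j, hjk, hj, not_lt.1 fun hlt => hno _ ⟨hpj, ?_⟩ (k - (j + 1)) ?_⟩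
  · rwa [iterate_succ_apply']
  · rw [← iterate_add_apply, Nat.sub_add_cancel hjk, hk]

section Interval

variable {α : Type*} [ConditionallyCompleteLinearOrder α] [TopologicalSpace α] [OrderTopology α]

theorem isHorseshoe_of_fold {G : α → α} {a₀ a₁ d : α} (hd : d ∈ uIcc a₀ a₁)
    (hG : ContinuousOn G (uIcc a₀ a₁)) (hGd : G d ∉ uIcc a₀ a₁)
    (h₀ : SurjOn G (uIcc a₀ d) (uIcc a₀ a₁)) (h₁ : SurjOn G (uIcc a₁ d) (uIcc a₀ a₁)) :
    IsHorseshoe G (fun b => uIcc (cond b a₀ a₁) d ∩ G ⁻¹' uIcc a₀ a₁) ∧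
      ∀ b, uIcc (cond b a₀ a₁) d ∩ G ⁻¹' uIcc a₀ a₁ ⊆ uIcc a₀ a₁ := by
  have hsub : ∀ b, uIcc (cond b a₀ a₁) d ⊆ uIcc a₀ a₁ := by
    rintro (_ | _)
    · exact uIcc_comm a₁ d ▸ uIcc_subset_uIcc_right hd
    · exact uIcc_subset_uIcc_left hd
  have hsurj : ∀ b, SurjOn G (uIcc (cond b a₀ a₁) d ∩ G ⁻¹' uIcc a₀ a₁) (uIcc a₀ a₁) := by
    intro b t ht
    obtain ⟨s, hs, rfl⟩ := (by cases b <;> assumption : SurjOn G (uIcc (cond b a₀ a₁) d) _) ht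
    exact ⟨s, ⟨hs, ht⟩, rfl⟩
  refine ⟨⟨fun b => ?_, fun b => ?_, ?_, fun a b => ?_⟩,
    fun b => inter_subset_left.trans (hsub b)⟩
  · exact isCompact_uIcc.of_isClosed_subset
      ((hG.mono (hsub b)).preimage_isClosed_of_isClosed isCompact_uIcc.isClosed
        isCompact_uIcc.isClosed) inter_subset_left
  · obtain ⟨s, hs, -⟩ := hsurj b left_mem_uIcc
    exact ⟨s, hs⟩
  · refine Set.disjoint_left.2 fun t ht ht' => hGd ?_
    have htd : t = d := by
      have h := ht.1
      have h' := ht'.1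
      simp only [cond_true, cond_false, Set.mem_uIcc] at h h' hd
      rcases h with h | h <;> rcases h' with h' | h' <;> rcases hd with hd | hd <;> order
    exact htd ▸ ht.2
  · exact (hsurj a).mono subset_rfl (inter_subset_left.trans (hsub b))

variable [DenselyOrdered α] {g : α → α} {I : Set α}

theorem exists_isHorseshoe_of_iterate_eq (hg : ContinuousOn g I) (hgI : MapsTo g I I)
    (hI : I.OrdConnected) {p y z : α} (hp : p ∈ I) (hy : y ∈ I) (hgp : g p = p)
    (hyz : y ∈ uIcc p z) (hne : y ≠ z) {k i : ℕ} (hk : g^[k] y = z) (hi : g^[i] z = p) :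
    ∃ N K, IsHorseshoe (g^[N]) K ∧ ∀ b, K b ⊆ I := by
  have hJI : uIcc p y ⊆ I := hI.uIcc_subset hp hy
  have hcont : ∀ N, ContinuousOn g^[N] (uIcc p y) := fun N => (hg.iterate hgI N).mono hJI
  have hzJ : z ∉ uIcc p y := fun hz => by
    rw [Set.mem_uIcc] at hz hyz
    exact hne (by rcases hz with hz | hz <;> rcases hyz with hyz | hyz <;> order)
  have hcov : SurjOn g^[k] (uIcc p y) (uIcc p z) := by
    have h := intermediate_value_uIcc (hcont k)
    rwa [iterate_fixed hgp, hk] at h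
  set N := k * (i + 1) with hN
  have hcovG : SurjOn g^[N] (uIcc p y) (uIcc p z) := by
    rw [hN, iterate_mul]
    exact ((hcov.mono (uIcc_subset_uIcc_left hyz) subset_rfl).iterate i).comp hcov
  have hGp : g^[N] p = p := iterate_fixed hgp N
  have hGy : g^[N] y = p := by
    have hk0 : k ≠ 0 := by rintro rfl; exact hne hk
    rw [hN, Nat.mul_succ, iterate_add_apply, hk]
    exact iterate_eq_of_iterate_eq_of_le hgp hi
      (Nat.le_mul_of_pos_left i (Nat.pos_of_ne_zero hk0))
  obtain ⟨d, hd, hGd⟩ := hcovG right_mem_uIcc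
  have hfold : ∀ a, g^[N] a = p → uIcc a d ⊆ uIcc p y →
      SurjOn g^[N] (uIcc a d) (uIcc p y) := by
    intro a ha hsub
    have h := intermediate_value_uIcc ((hcont N).mono hsub)
    rw [ha, hGd] at h
    exact (uIcc_subset_uIcc_left hyz).trans h
  obtain ⟨hK, hKJ⟩ := isHorseshoe_of_fold hd (hcont N) (hGd ▸ hzJ)
    (hfold p hGp (uIcc_subset_uIcc_left hd))
    (hfold y hGy (uIcc_comm d y ▸ uIcc_subset_uIcc_right hd))
  exact ⟨N, _, hK, fun b => (hKJ b).trans hJI⟩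

theorem exists_isGreatest_lt_le_apply (hg : ContinuousOn g I) (hI : I.OrdConnected)
    {p x w₀ : α} (hp : p ∈ I) (hgp : g p = p) (hpx : p < x) (hw₀ : w₀ ∈ I) (hw₀p : w₀ < p)
    (hw₀x : x ≤ g w₀) : ∃ s, IsGreatest {w ∈ I | w < p ∧ x ≤ g w} s ∧ g s = x := by
  have hivt : ∀ w ∈ I, w ≤ p → x ≤ g w → ∃ z ∈ Icc w p, g z = x := fun w hw hwp hwx =>
    intermediate_value_Icc' hwp (hg.mono (hI.out hw hp)) ⟨hgp.symm ▸ hpx.le, hwx⟩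
  set S := Icc w₀ p ∩ g ⁻¹' {x}
  have hS : IsClosed S :=
    (hg.mono (hI.out hw₀ hp)).preimage_isClosed_of_isClosed isClosed_Icc isClosed_singleton
  have hSne : S.Nonempty := (hivt w₀ hw₀ hw₀p.le hw₀x).imp fun _ ⟨hz, hgz⟩ => ⟨hz, hgz⟩
  have hSbdd : BddAbove S := bddAbove_Icc.mono inter_subset_left
  obtain ⟨⟨hw₀s, hsp⟩, hgs⟩ := hS.csSup_mem hSne hSbdd
  have hsp : sSup S < p := hsp.lt_of_ne fun h => hpx.ne' (by rw [← hgs, h, hgp])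
  refine ⟨sSup S, ⟨⟨hI.out hw₀ hp ⟨hw₀s, hsp.le⟩, hsp, hgs.ge⟩, fun w ⟨hw, hwp, hwx⟩ => ?_⟩,
    hgs⟩
  obtain ⟨z, hz, hgz⟩ := hivt w hw hwp.le hwx
  rcases le_total w₀ z with hw₀z | hzw₀
  · exact hz.1.trans (le_csSup hSbdd ⟨⟨hw₀z, hz.2⟩, hgz⟩)
  · exact hz.1.trans (hzw₀.trans hw₀s)

theorem exists_isHorseshoe_of_forall_iterate_ne (hg : ContinuousOn g I) (hgI : MapsTo g I I)
    (hI : I.OrdConnected) {p x : α} (hp : p ∈ I) (hgp : g p = p) (hpx : p < x) {i : ℕ}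
    (hi : g^[i] x = p) (hno : ∀ v ∈ Ico p x, ∀ k, g^[k] v ≠ x)
    (hxu : ∀ V, IsOpen V → p ∈ V → ∃ k, 1 ≤ k ∧ x ∈ g^[k] '' (V ∩ I)) :
    ∃ N K, IsHorseshoe (g^[N]) K ∧ ∀ b, K b ⊆ I := by
  have hleft : ∀ V, IsOpen V → p ∈ V → ∃ y ∈ V ∩ I, y < p ∧ ∃ k, g^[k] y = x := by
    intro V hV hpV
    obtain ⟨k, -, y, ⟨⟨hyV, hyx⟩, hyI⟩, hk⟩ := hxu (V ∩ Iio x) (hV.inter isOpen_Iio) ⟨hpV, hpx⟩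
    exact ⟨y, ⟨hyV, hyI⟩, not_le.1 fun hpy => hno y ⟨hpy, hyx⟩ k hk, k, hk⟩
  obtain ⟨y₀, ⟨-, hy₀⟩, hy₀p, k₀, hk₀⟩ := hleft univ isOpen_univ trivial
  obtain ⟨j₀, -, hj₀p, hj₀x⟩ := exists_iterate_lt_le_apply_iterate hpx hno hy₀p hk₀
  obtain ⟨s, ⟨⟨hs, hsp, -⟩, hmax⟩, hgs⟩ :=
    exists_isGreatest_lt_le_apply hg hI hp hgp hpx (hgI.iterate j₀ hy₀) hj₀p hj₀x
  obtain ⟨y, ⟨hsy, hy⟩, hyp, k, hk⟩ := hleft (Ioi s) isOpen_Ioi hsp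
  obtain ⟨j, -, hjp, hjx⟩ := exists_iterate_lt_le_apply_iterate hpx hno hyp hk
  have hjs : g^[j] y ≤ s := hmax ⟨hgI.iterate j hy, hjp, hjx⟩
  obtain ⟨y', hy', hy's⟩ : ∃ y' ∈ Icc y p, g^[j] y' = s :=
    intermediate_value_Icc hyp.le ((hg.iterate hgI j).mono (hI.out hy hp))
      ⟨hjs, (iterate_fixed hgp j).symm ▸ hsp.le⟩
  have hsy' : s < y' := hsy.trans_le hy'.1
  exact exists_isHorseshoe_of_iterate_eq hg hgI hI hp (hI.out hy hp hy') hgp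
    (Icc_subset_uIcc' ⟨hsy'.le, hy'.2⟩) hsy'.ne' hy's (i := i + 1)
    (by rw [iterate_succ_apply, hgs, hi])

theorem exists_isHorseshoe_of_homoclinic_of_lt (hg : ContinuousOn g I) (hgI : MapsTo g I I)
    (hI : I.OrdConnected) {p x : α} (hp : p ∈ I) (hx : x ∈ I) (hgp : g p = p) (hpx : p < x)
    {i : ℕ} (hi : g^[i] x = p)
    (hxu : ∀ V, IsOpen V → p ∈ V → ∃ k, 1 ≤ k ∧ x ∈ g^[k] '' (V ∩ I)) :
    ∃ N K, IsHorseshoe (g^[N]) K ∧ ∀ b, K b ⊆ I := by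
  by_cases hright : ∃ y ∈ Ico p x, ∃ k, g^[k] y = x
  · obtain ⟨y, hy, k, hk⟩ := hright
    exact exists_isHorseshoe_of_iterate_eq hg hgI hI hp (hI.out hp hx (Ico_subset_Icc_self hy))
      hgp (Icc_subset_uIcc (Ico_subset_Icc_self hy)) hy.2.ne hk hi
  · push Not at hright
    exact exists_isHorseshoe_of_forall_iterate_ne hg hgI hI hp hgp hpx hi hright hxu

end Interval

theorem pos_entropy_of_homoclinic_general
    (A B : ℝ) (f : ℝ → ℝ)
    (hf : ContinuousOn f (Set.Icc A B))
    (hmap : Set.MapsTo f (Set.Icc A B) (Set.Icc A B))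
    (p : ℝ) (n : ℕ)
    (hper : Function.IsPeriodicPt f n p)
    (x : ℝ) (hxp : x ≠ p)
    (hxu : x ∈ unstableManifold (f^[n]) (Set.Icc A B) p)
    (m : ℕ) (hhom : f^[m * n] x = p) :
    0 < topEntropy f (Set.Icc A B) := by
  obtain ⟨hx, hxu⟩ := hxu
  have hg : ContinuousOn (f^[n]) (Icc A B) := hf.iterate hmap n
  have hgI : MapsTo (f^[n]) (Icc A B) (Icc A B) := hmap.iterate n
  have hi : (f^[n])^[m] x = p := by rwa [← iterate_mul, mul_comm]
  have hp : p ∈ Icc A B := hi ▸ hgI.iterate m hx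
  obtain ⟨N, K, hK, hKI⟩ : ∃ N K, IsHorseshoe ((f^[n])^[N]) K ∧ ∀ b, K b ⊆ Icc A B := by
    rcases hxp.lt_or_gt with hxp | hpx
    -- the case `p < x` for the reversed order
    · exact exists_isHorseshoe_of_homoclinic_of_lt (α := ℝᵒᵈ) hg hgI ordConnected_Icc.dual hp hx
        hper hxp hi hxu
    · exact exists_isHorseshoe_of_homoclinic_of_lt hg hgI ordConnected_Icc hp hx hper hpx hi hxu
  rw [← iterate_mul] at hK
  exact hK.topEntropy_pos hKI

/-- A homoclinic point forces positive topological entropy ([Bl]). -/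
theorem pos_entropy_of_homoclinic
    (A B : ℝ) (f : ℝ → ℝ)
    (hf : ContinuousOn f (Set.Icc A B))
    (hmap : Set.MapsTo f (Set.Icc A B) (Set.Icc A B))
    (p : ℝ) (n : ℕ) (hn : 1 ≤ n) (hpI : p ∈ Set.Icc A B)
    (hper : Function.IsPeriodicPt f n p)
    (x : ℝ) (hxp : x ≠ p)
    (hxu : x ∈ unstableManifold (f^[n]) (Set.Icc A B) p)
    (m : ℕ) (hm : 1 ≤ m) (hhom : f^[m * n] x = p) :
    0 < topEntropy f (Set.Icc A B) :=
  pos_entropy_of_homoclinic_general A B f hf hmap p n hper x hxp hxu m hhom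
end

section
/- Let f : I → I be continuous on a compact interval with a fixed point p, and suppose there exist points a < b in I with p ∈ [a,b] ⊆ W^u(p,f), a point y ∈ (a,b), y ≠ p, and k ≥ 1 with f^k(y) = p. Then f has a periodic point whose period is not a power of 2, and hence the set of periods of f is not contained in {2^n : n ∈ ℕ}. -/
/-!
Replacing `y` by the last point of its orbit before `p`, we may assume `f y = p`, and after
conjugating by `x ↦ -x`, that `p < y`. Points arbitrarily close to `p` are sent to `y` by iterates
of `f`. If one of them, `z`, lies in `(p, y)` with `f^[n] z = y`, then `f^[n]` maps both `[p, z]`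
and `[z, y]` over `[p, y]`: a horseshoe. Otherwise `f` maps `[p, y]` into `[p, y)`. Let `ξ < p` be
the largest point left of `p` with `f ξ ≥ y`. Either `f` drops to `ξ` somewhere on `[ξ, p]`, which
is again a horseshoe, or `f` maps `(ξ, y]` into `(ξ, y)` (and `[A, y]` into `[A, y)` when there is
no such `ξ`), so no point near `p` ever reaches `y`.

A horseshoe `J = [α, β]`, `K = [β, γ]` of `g = f^[N]` contains an interval `L ⊆ J` with
`g '' L = K`; then `g^[3]` maps `L` over `J ⊇ L`, and its fixed point in `L` is not fixed by `g`,
so it has `g`-period 3 and hence an `f`-period divisible by 3.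
-/

open Set Function

theorem exists_Icc_subset_image_eq_Icc_of_le {g : ℝ → ℝ} {s t : ℝ}
    (hg : ContinuousOn g (Icc s t)) (hst : s ≤ t) (hgst : g s ≤ g t) :
    ∃ s' t', Icc s' t' ⊆ Icc s t ∧ g '' Icc s' t' = Icc (g s) (g t) := by
  have hcompact : ∀ c, ∀ u ≤ t, IsCompact (Icc s u ∩ g ⁻¹' {c}) := fun c u hu =>
    isCompact_Icc.of_isClosed_subset
      ((hg.mono (Icc_subset_Icc_right hu)).preimage_isClosed_of_isClosed isClosed_Icc
        isClosed_singleton) inter_subset_left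
  -- `t'` is the first point where `g = g t`, and `s'` the last point before `t'` where `g = g s`
  obtain ⟨t', ⟨ht', hgt'⟩, ht'_min⟩ :=
    (hcompact (g t) t le_rfl).exists_isLeast ⟨t, right_mem_Icc.2 hst, rfl⟩
  obtain ⟨s', ⟨hs', hgs'⟩, hs'_max⟩ :=
    (hcompact (g s) t' ht'.2).exists_isGreatest ⟨s, left_mem_Icc.2 ht'.1, rfl⟩
  rw [mem_preimage, mem_singleton_iff] at hgs' hgt'
  have hsub : Icc s' t' ⊆ Icc s t := Icc_subset_Icc hs'.1 ht'.2
  refine ⟨s', t', hsub,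
    Subset.antisymm ?_ (hgs' ▸ hgt' ▸ intermediate_value_Icc hs'.2 (hg.mono hsub))⟩
  rintro _ ⟨x, hx, rfl⟩
  constructor
  · by_contra! hlt
    obtain ⟨w, hw, hgw⟩ := intermediate_value_Icc hx.2
      (hg.mono ((Icc_subset_Icc_left hx.1).trans hsub)) ⟨hlt.le, hgt'.symm ▸ hgst⟩
    have hws' : w ≤ s' := hs'_max ⟨⟨hs'.1.trans (hx.1.trans hw.1), hw.2⟩, hgw⟩
    obtain rfl : w = x := le_antisymm (hws'.trans hx.1) hw.1
    exact hlt.ne hgw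
  · by_contra! hlt
    obtain ⟨w, hw, hgw⟩ := intermediate_value_Icc (hs'.1.trans hx.1)
      (hg.mono (Icc_subset_Icc_right (hx.2.trans ht'.2))) ⟨hgst, hlt.le⟩
    have ht'w : t' ≤ w := ht'_min ⟨⟨hw.1, hw.2.trans (hx.2.trans ht'.2)⟩, hgw⟩
    obtain rfl : w = x := le_antisymm hw.2 (hx.2.trans ht'w)
    exact hlt.ne' hgw

theorem Set.SurjOn.exists_Icc_subset_image_eq {g : ℝ → ℝ} {a b c d : ℝ}
    (hg : ContinuousOn g (Icc a b)) (hcd : c ≤ d) (h : SurjOn g (Icc a b) (Icc c d)) :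
    ∃ a' b', Icc a' b' ⊆ Icc a b ∧ g '' Icc a' b' = Icc c d := by
  obtain ⟨s, hs, rfl⟩ := h (left_mem_Icc.2 hcd)
  obtain ⟨t, ht, rfl⟩ := h (right_mem_Icc.2 hcd)
  rcases le_total s t with hst | hts
  · obtain ⟨s', t', hsub, himg⟩ :=
      exists_Icc_subset_image_eq_Icc_of_le (hg.mono (Icc_subset_Icc hs.1 ht.2)) hst hcd
    exact ⟨s', t', hsub.trans (Icc_subset_Icc hs.1 ht.2), himg⟩
  · obtain ⟨s', t', hsub, himg⟩ := exists_Icc_subset_image_eq_Icc_of_le (g := fun x => -g x)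
      (hg.mono (Icc_subset_Icc ht.1 hs.2)).neg hts (neg_le_neg hcd)
    refine ⟨s', t', hsub.trans (Icc_subset_Icc ht.1 hs.2), ?_⟩
    have := congrArg Neg.neg himg
    rw [← image_neg_eq_neg, image_image, neg_Icc, neg_neg, neg_neg] at this
    simpa only [neg_neg] using this

theorem exists_minimalPeriod_eq_three_of_surjOn {g : ℝ → ℝ} {I : Set ℝ} {α β γ : ℝ}
    (hg : ContinuousOn g I) (hgI : MapsTo g I I) (hI : Icc α γ ⊆ I) (hαβ : α ≤ β) (hβγ : β ≤ γ)
    (hJ : SurjOn g (Icc α β) (Icc α γ)) (hK : SurjOn g (Icc β γ) (Icc α γ)) (hβ : g β ≠ β) :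
    ∃ x ∈ I, minimalPeriod g x = 3 := by
  have hJI : Icc α β ⊆ I := (Icc_subset_Icc_right hβγ).trans hI
  have hKαγ : Icc β γ ⊆ Icc α γ := Icc_subset_Icc_left hαβ
  obtain ⟨a, b, hab, himg⟩ := (hJ.mono subset_rfl hKαγ).exists_Icc_subset_image_eq (hg.mono hJI) hβγ
  have hle : a ≤ b :=
    nonempty_Icc.1 ((himg ▸ nonempty_Icc.2 hβγ : (g '' Icc a b).Nonempty).of_image)
  have hsurj : SurjOn g^[3] (Icc a b) (Icc a b) :=
    ((hK.mono hKαγ subset_rfl).comp (hK.comp (himg ▸ surjOn_image g (Icc a b)))).mono subset_rfl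
      (hab.trans (Icc_subset_Icc_right hβγ))
  obtain ⟨x, hx, hx3⟩ :=
    exists_mem_Icc_isFixedPt_of_surjOn ((hg.iterate hgI 3).mono (hab.trans hJI)) hle hsurj
  rcases Nat.prime_three.eq_one_or_self_of_dvd _ (IsPeriodicPt.minimalPeriod_dvd hx3) with h1 | h3
  · have hfix : g x = x := minimalPeriod_eq_one_iff_isFixedPt.1 h1
    have hxK : g x ∈ Icc β γ := himg ▸ mem_image_of_mem g hx
    rw [hfix] at hxK
    obtain rfl : x = β := le_antisymm (hab hx).2 hxK.1
    exact absurd hfix hβ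
  · exact ⟨x, hJI (hab hx), h3⟩

theorem exists_minimalPeriod_eq_three_of_endpoints_le {g : ℝ → ℝ} {I : Set ℝ} {α β γ : ℝ}
    (hg : ContinuousOn g I) (hgI : MapsTo g I I) (hI : Icc α γ ⊆ I) (hαβ : α ≤ β) (hβγ : β < γ)
    (hα : g α ≤ α) (hβ : γ ≤ g β) (hγ : g γ ≤ α) : ∃ x ∈ I, minimalPeriod g x = 3 :=
  exists_minimalPeriod_eq_three_of_surjOn hg hgI hI hαβ hβγ.le
    ((Icc_subset_Icc hα hβ).trans
      (intermediate_value_Icc hαβ (hg.mono ((Icc_subset_Icc_right hβγ.le).trans hI))))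
    ((Icc_subset_Icc hγ hβ).trans
      (intermediate_value_Icc' hβγ.le (hg.mono ((Icc_subset_Icc_left hαβ).trans hI))))
    (hβγ.trans_le hβ).ne'

theorem exists_minimalPeriod_eq_three_of_endpoints_ge {g : ℝ → ℝ} {I : Set ℝ} {α β γ : ℝ}
    (hg : ContinuousOn g I) (hgI : MapsTo g I I) (hI : Icc α γ ⊆ I) (hαβ : α < β) (hβγ : β ≤ γ)
    (hα : γ ≤ g α) (hβ : g β ≤ α) (hγ : γ ≤ g γ) : ∃ x ∈ I, minimalPeriod g x = 3 :=
  exists_minimalPeriod_eq_three_of_surjOn hg hgI hI hαβ.le hβγ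
    ((Icc_subset_Icc hβ hα).trans
      (intermediate_value_Icc' hαβ.le (hg.mono ((Icc_subset_Icc_right hβγ).trans hI))))
    ((Icc_subset_Icc hβ hγ).trans
      (intermediate_value_Icc hβγ (hg.mono ((Icc_subset_Icc_left hαβ.le).trans hI))))
    (hβ.trans_lt hαβ).ne

theorem mapsTo_unstableManifold {g : ℝ → ℝ} {I : Set ℝ} {p : ℝ} (hg : MapsTo g I I) :
    MapsTo g (unstableManifold g I p) (unstableManifold g I p) := fun x hx =>
  ⟨hg hx.1, fun V hV hpV => by
    obtain ⟨n, hn, z, hz, rfl⟩ := hx.2 V hV hpV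
    exact ⟨n + 1, by omega, z, hz, iterate_succ_apply' g n z⟩⟩

theorem not_mapsTo_of_mem_unstableManifold {g : ℝ → ℝ} {I s t V : Set ℝ} {p y : ℝ}
    (hy : y ∈ unstableManifold g I p) (hV : IsOpen V) (hpV : p ∈ V) (hVs : V ∩ I ⊆ s)
    (hts : t ⊆ s) (hyt : y ∉ t) : ¬MapsTo g s t := by
  intro hst
  obtain ⟨n, hn, z, hz, hzy⟩ := hy.2 V hV hpV
  obtain ⟨m, rfl⟩ : ∃ m, n = m + 1 := ⟨n - 1, by omega⟩
  rw [iterate_succ_apply'] at hzy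
  exact hyt (hzy ▸ hst ((hst.mono_right hts).iterate m (hVs hz)))

theorem neg_mem_unstableManifold {g : ℝ → ℝ} {A B p y : ℝ}
    (hy : y ∈ unstableManifold g (Icc A B) p) :
    -y ∈ unstableManifold (fun x => -g (-x)) (Icc (-B) (-A)) (-p) := by
  have hconj : Semiconj Neg.neg g (fun x => -g (-x)) := fun x => by simp
  have hneg : ∀ {x}, x ∈ Icc A B → -x ∈ Icc (-B) (-A) := fun hx =>
    neg_mem_Icc_iff.2 (by simpa using hx)
  refine ⟨hneg hy.1, fun V hV hpV => ?_⟩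
  obtain ⟨n, hn, z, ⟨hzV, hzI⟩, hzy⟩ :=
    hy.2 (Neg.neg ⁻¹' V) (hV.preimage continuous_neg) hpV
  exact ⟨n, hn, -z, ⟨hzV, hneg hzI⟩, by rw [← hconj.iterate_right n z, hzy]⟩

theorem minimalPeriod_iterate_neg_conj (g : ℝ → ℝ) (N : ℕ) (x : ℝ) :
    minimalPeriod (fun x => -g (-x))^[N] (-x) = minimalPeriod g^[N] x := by
  have h₁ : Semiconj Neg.neg g (fun x => -g (-x)) := fun x => by simp
  have h₂ : Semiconj Neg.neg (fun x => -g (-x)) g := fun x => by simp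
  refine minimalPeriod_eq_minimalPeriod_iff.2 fun n =>
    ⟨fun h => by simpa using h.map (h₂.iterate_right N), fun h => h.map (h₁.iterate_right N)⟩

theorem exists_iterate_ne_and_apply_eq {α : Type*} {f : α → α} {y p : α} {k : ℕ}
    (hky : f^[k] y = p) (hyp : y ≠ p) : ∃ j, f^[j] y ≠ p ∧ f (f^[j] y) = p := by
  induction k with
  | zero => exact absurd hky hyp
  | succ k ih =>
    by_cases hk : f^[k] y = p
    · exact ih hk
    · exact ⟨k, hk, by rwa [iterate_succ_apply'] at hky⟩

theorem iterate_eq_of_apply_eq_of_isFixedPt {α : Type*} {f : α → α} {y p : α} (hfp : IsFixedPt f p)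
    (hfy : f y = p) {n : ℕ} (hn : 1 ≤ n) : f^[n] y = p := by
  obtain ⟨m, rfl⟩ : ∃ m, n = m + 1 := ⟨n - 1, by omega⟩
  rw [iterate_succ_apply, hfy, iterate_fixed hfp]

section Homoclinic

variable {f : ℝ → ℝ} {A B p y : ℝ}

theorem exists_minimalPeriod_iterate_eq_three_of_mem_Ioo (hf : ContinuousOn f (Icc A B))
    (hmap : MapsTo f (Icc A B) (Icc A B)) (hpI : p ∈ Icc A B) (hyI : y ∈ Icc A B) (hfp : f p = p)
    (hfy : f y = p) {z : ℝ} (hz : z ∈ Ioo p y) {n : ℕ} (hn : 1 ≤ n) (hzy : f^[n] z = y) :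
    ∃ N, ∃ x ∈ Icc A B, minimalPeriod f^[N] x = 3 :=
  ⟨n, exists_minimalPeriod_eq_three_of_endpoints_le (hf.iterate hmap n) (hmap.iterate n)
    (Icc_subset_Icc hpI.1 hyI.2) hz.1.le hz.2 (iterate_fixed hfp n).le hzy.ge
    (iterate_eq_of_apply_eq_of_isFixedPt hfp hfy hn).le⟩

theorem mapsTo_Icc_Ico_of_forall_iterate_ne (hf : ContinuousOn f (Icc A B)) (hpI : p ∈ Icc A B)
    (hfp : f p = p) (hy : y ∈ unstableManifold f (Icc A B) p) (hpy : p < y)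
    (hreach : ∀ z ∈ Icc p y, ∀ n, 1 ≤ n → f^[n] z ≠ y) : MapsTo f (Icc p y) (Ico p y) := by
  intro t ht
  have hcont : ContinuousOn f (Icc p t) := hf.mono (Icc_subset_Icc hpI.1 (ht.2.trans hy.1.2))
  refine ⟨not_lt.1 fun hlt => ?_, not_le.1 fun hle => ?_⟩
  · -- a point near `p` reaching `y` lies left of `p`, and `[p, t]` contains a preimage of it
    obtain ⟨n, hn, z, ⟨hzV, -⟩, hzy⟩ := hy.2 (Ioo (f t) y) isOpen_Ioo ⟨hlt, hpy⟩
    have hzp : z ≤ f p := by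
      rw [hfp]; exact not_lt.1 fun hpz => hreach z ⟨hpz.le, hzV.2.le⟩ n hn hzy
    obtain ⟨u, hu, rfl⟩ := intermediate_value_Icc' ht.1 hcont ⟨hzV.1.le, hzp⟩
    exact hreach u ⟨hu.1, hu.2.trans ht.2⟩ (n + 1) (by omega) (by rwa [iterate_succ_apply])
  · obtain ⟨v, hv, hfv⟩ := intermediate_value_Icc ht.1 hcont ⟨hfp.trans_le hpy.le, hle⟩
    exact hreach v ⟨hv.1, hv.2.trans ht.2⟩ 1 le_rfl hfv

theorem exists_minimalPeriod_iterate_eq_three_of_mapsTo_Icc_Ico (hf : ContinuousOn f (Icc A B))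
    (hmap : MapsTo f (Icc A B) (Icc A B)) (hpI : p ∈ Icc A B) (hfp : f p = p)
    (hy : y ∈ unstableManifold f (Icc A B) p) (hpy : p < y)
    (hinv : MapsTo f (Icc p y) (Ico p y)) : ∃ N, ∃ x ∈ Icc A B, minimalPeriod f^[N] x = 3 := by
  by_cases hS : ∃ w ∈ Icc A p, y ≤ f w
  · obtain ⟨ξ, ⟨hξ, hfξ⟩, hξ_max⟩ := (isCompact_Icc.of_isClosed_subset
      ((hf.mono (Icc_subset_Icc_right hpI.2)).preimage_isClosed_of_isClosed isClosed_Icc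
        isClosed_Ici) inter_subset_left).exists_isGreatest hS
    rw [mem_preimage, mem_Ici] at hfξ
    have hξp : ξ < p := hξ.2.lt_of_ne (by rintro rfl; linarith)
    have hlt : ∀ t ∈ Ioc ξ p, f t < y := fun t ht =>
      not_le.1 fun hle => (hξ_max ⟨⟨hξ.1.trans ht.1.le, ht.2⟩, hle⟩).not_gt ht.1
    by_cases hdip : ∃ t ∈ Icc ξ p, f t ≤ ξ
    · obtain ⟨t, ht, hft⟩ := hdip
      have hξt : ξ < t := ht.1.lt_of_ne (by rintro rfl; linarith)
      obtain ⟨x, hx, h3⟩ := exists_minimalPeriod_eq_three_of_endpoints_ge hf hmap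
        (Icc_subset_Icc hξ.1 hpI.2) hξt ht.2 (hpy.le.trans hfξ) hft hfp.ge
      exact ⟨1, x, hx, by rwa [iterate_one]⟩
    · push Not at hdip
      have hmaps : MapsTo f (Ioc ξ y) (Ioo ξ y) := fun t ht => by
        rcases le_or_gt t p with htp | hpt
        · exact ⟨hdip t ⟨ht.1.le, htp⟩, hlt t ⟨ht.1, htp⟩⟩
        · exact ⟨hξp.trans_le (hinv ⟨hpt.le, ht.2⟩).1, (hinv ⟨hpt.le, ht.2⟩).2⟩
      exact absurd hmaps (not_mapsTo_of_mem_unstableManifold hy isOpen_Ioo ⟨hξp, hpy⟩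
        (inter_subset_left.trans Ioo_subset_Ioc_self) Ioo_subset_Ioc_self (fun h => h.2.false))
  · push Not at hS
    have hmaps : MapsTo f (Icc A y) (Ico A y) := fun t ht => by
      refine ⟨(hmap ⟨ht.1, ht.2.trans hy.1.2⟩).1, ?_⟩
      rcases le_or_gt t p with htp | hpt
      · exact hS t ⟨ht.1, htp⟩
      · exact (hinv ⟨hpt.le, ht.2⟩).2
    exact absurd hmaps (not_mapsTo_of_mem_unstableManifold hy isOpen_Iio hpy
      (fun x hx => ⟨hx.2.1, hx.1.le⟩) Ico_subset_Icc_self (fun h => h.2.false))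

theorem exists_minimalPeriod_iterate_eq_three_of_lt (hf : ContinuousOn f (Icc A B))
    (hmap : MapsTo f (Icc A B) (Icc A B)) (hpI : p ∈ Icc A B) (hfp : f p = p)
    (hy : y ∈ unstableManifold f (Icc A B) p) (hfy : f y = p) (hpy : p < y) :
    ∃ N, ∃ x ∈ Icc A B, minimalPeriod f^[N] x = 3 := by
  by_cases hreach : ∃ z ∈ Icc p y, ∃ n, 1 ≤ n ∧ f^[n] z = y
  · obtain ⟨z, hz, n, hn, hzy⟩ := hreach
    have hzp : z ≠ p := by rintro rfl; exact hpy.ne (iterate_fixed hfp n ▸ hzy)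
    have hzy' : z ≠ y := by
      rintro rfl; exact hpy.ne (iterate_eq_of_apply_eq_of_isFixedPt hfp hfy hn ▸ hzy)
    exact exists_minimalPeriod_iterate_eq_three_of_mem_Ioo hf hmap hpI hy.1 hfp hfy
      ⟨hz.1.lt_of_ne' hzp, hz.2.lt_of_ne hzy'⟩ hn hzy
  push Not at hreach
  exact exists_minimalPeriod_iterate_eq_three_of_mapsTo_Icc_Ico hf hmap hpI hfp hy hpy
    (mapsTo_Icc_Ico_of_forall_iterate_ne hf hpI hfp hy hpy hreach)

theorem exists_minimalPeriod_iterate_eq_three_of_homoclinic (hf : ContinuousOn f (Icc A B))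
    (hmap : MapsTo f (Icc A B) (Icc A B)) (hpI : p ∈ Icc A B) (hfp : f p = p)
    (hy : y ∈ unstableManifold f (Icc A B) p) (hfy : f y = p) (hyp : y ≠ p) :
    ∃ N, ∃ x ∈ Icc A B, minimalPeriod f^[N] x = 3 := by
  rcases hyp.lt_or_gt with hyp | hpy
  · have hneg : ∀ {a b x : ℝ}, x ∈ Icc a b → -x ∈ Icc (-b) (-a) := fun hx =>
      ⟨neg_le_neg hx.2, neg_le_neg hx.1⟩
    have hneg' : MapsTo Neg.neg (Icc (-B) (-A)) (Icc A B) := fun x hx => by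
      simpa using hneg hx
    obtain ⟨N, x, hx, h3⟩ := exists_minimalPeriod_iterate_eq_three_of_lt (f := fun x => -f (-x))
      (hf.comp continuousOn_neg hneg').neg (fun x hx => hneg (hmap (hneg' hx))) (hneg hpI)
      (by simp [hfp]) (neg_mem_unstableManifold hy) (by simp [hfy]) (neg_lt_neg hyp)
    exact ⟨N, -x, hneg' hx, by rwa [← minimalPeriod_iterate_neg_conj, neg_neg]⟩
  · exact exists_minimalPeriod_iterate_eq_three_of_lt hf hmap hpI hfp hy hfy hpy

end Homoclinic

theorem period_not_pow_two_of_homoclinic_general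
    (A B : ℝ) (f : ℝ → ℝ)
    (hf : ContinuousOn f (Set.Icc A B))
    (hmap : Set.MapsTo f (Set.Icc A B) (Set.Icc A B))
    (p : ℝ) (hpI : p ∈ Set.Icc A B) (hfp : f p = p)
    (a b : ℝ)
    (habu : Set.Icc a b ⊆ unstableManifold f (Set.Icc A B) p)
    (y : ℝ) (hy : y ∈ Set.Ioo a b) (hyp : y ≠ p)
    (k : ℕ) (hky : f^[k] y = p) :
    ∃ x ∈ Set.Icc A B, 1 ≤ Function.minimalPeriod f x ∧
      ∀ j : ℕ, Function.minimalPeriod f x ≠ 2 ^ j := by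
  obtain ⟨j, hjp, hj⟩ := exists_iterate_ne_and_apply_eq hky hyp
  have hju : f^[j] y ∈ unstableManifold f (Icc A B) p :=
    (mapsTo_unstableManifold hmap).iterate j (habu (Ioo_subset_Icc_self hy))
  obtain ⟨N, x, hxI, hx3⟩ :=
    exists_minimalPeriod_iterate_eq_three_of_homoclinic hf hmap hpI hfp hju hj hjp
  have hN : N ≠ 0 := by rintro rfl; simp at hx3
  have hpos : 0 < minimalPeriod f x := Nat.pos_of_ne_zero fun h0 => by
    simp [minimalPeriod_iterate_eq_div_gcd hN, h0] at hx3
  have h3 : 3 ∣ minimalPeriod f x :=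
    hx3 ▸ ((isPeriodicPt_minimalPeriod f x).iterate N).minimalPeriod_dvd
  refine ⟨x, hxI, hpos, fun i hi => ?_⟩
  have : 3 ∣ 2 := Nat.prime_three.dvd_of_dvd_pow (hi ▸ h3)
  omega

/-- A homoclinic point yields a periodic point whose least period is not a power of two,
so the set of periods of `f` is not contained in `{2^n : n ∈ ℕ}`. -/
theorem period_not_pow_two_of_homoclinic
    (A B : ℝ) (f : ℝ → ℝ)
    (hf : ContinuousOn f (Set.Icc A B))
    (hmap : Set.MapsTo f (Set.Icc A B) (Set.Icc A B))
    (p : ℝ) (hpI : p ∈ Set.Icc A B) (hfp : f p = p)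
    (a b : ℝ) (hab : a < b) (hpab : p ∈ Set.Icc a b)
    (habu : Set.Icc a b ⊆ unstableManifold f (Set.Icc A B) p)
    (y : ℝ) (hy : y ∈ Set.Ioo a b) (hyp : y ≠ p)
    (k : ℕ) (hk : 1 ≤ k) (hky : f^[k] y = p) :
    ∃ x ∈ Set.Icc A B, 1 ≤ Function.minimalPeriod f x ∧
      ∀ j : ℕ, Function.minimalPeriod f x ≠ 2 ^ j :=
  period_not_pow_two_of_homoclinic_general A B f hf hmap p hpI hfp a b habu y hy hyp k hky
end
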